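/- Let 𝔸 be an infinite type with decidable equality and let X be a set equipped with an action of the group of finitary permutations of 𝔸 (permutations fixing all but finitely many elements). If A and B are finite subsets of 𝔸 that both support an element x ∈ X (i.e., every finitary permutation fixing each element of A pointwise fixes x, and likewise for B), then A ∩ B also supports x. -/

import Mathlib

/-- The subgroup of finitary permutations of `𝔸`: permutations moving
only finitely many elements. -/
def FinPerm (𝔸 : Type*) : Subgroup (Equiv.Perm 𝔸) where
  carrier := {π : Equiv.Perm 𝔸 | {a | π a ≠ a}.Finite}
  one_mem' := by simp
  mul_mem' := by
    intro π σ hπ hσ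
    refine (hπ.union hσ).subset ?_
    intro a ha
    by_contra h
    simp only [Set.mem_union, Set.mem_setOf_eq, not_or, not_not] at h
    exact ha (by simp [Equiv.Perm.mul_apply, h.1, h.2])
  inv_mem' := by
    intro π hπ
    refine hπ.subset ?_
    intro a ha
    simp only [Set.mem_setOf_eq] at *
    intro h
    exact ha (by nth_rewrite 1 [← h]; simp)

/-- `A` supports `x`: every finitary permutation fixing `A` pointwise fixes `x`. -/
def NSupports (𝔸 : Type*) {X : Type*} [MulAction (FinPerm 𝔸) X] (A : Set 𝔸) (x : X) : Prop :=
  ∀ π : FinPerm 𝔸, (∀ a ∈ A, π.1 a = a) → π • x = x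

/-
The finitary permutations fixing `A ∩ B` pointwise are generated by the transpositions `(a b)`
with `a, b ∉ A ∩ B`, so it suffices that these fix `x`. Choosing a fresh `c ∉ A ∪ B`, we have
`(a b) = (a c)(b c)(a c)`, and each of `(a c)`, `(b c)` fixes `x` because it fixes `A` or `B`
pointwise.
-/

open Equiv MulAction Subgroup

namespace FinPerm

variable {𝔸 : Type*} [DecidableEq 𝔸]

theorem swap_mem (a b : 𝔸) : swap a b ∈ FinPerm 𝔸 :=
  (Set.toFinite {a, b}).subset fun _ ht => (swap_apply_ne_self_iff.1 ht).2

def swap (a b : 𝔸) : FinPerm 𝔸 := ⟨Equiv.swap a b, swap_mem a b⟩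

def swapsOutside (A : Set 𝔸) : Set (Perm 𝔸) :=
  {σ | ∃ a b, a ≠ b ∧ a ∉ A ∧ b ∉ A ∧ σ = Equiv.swap a b}

theorem mem_closure_swapsOutside {A : Set 𝔸} (π : FinPerm 𝔸) (hπ : ∀ a ∈ A, π.1 a = a) :
    π.1 ∈ closure (swapsOutside A) := by
  have hswap : ∀ σ ∈ swapsOutside A, σ.IsSwap := by
    rintro _ ⟨a, b, hab, -, -, rfl⟩
    exact ⟨a, b, hab, rfl⟩
  refine (mem_closure_isSwap hswap).2 ⟨π.2, fun y => ?_⟩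
  by_cases hy : π.1 y = y
  · rw [hy]
    exact mem_orbit_self y
  have hyA : y ∉ A := fun h => hy (hπ y h)
  have hπyA : π.1 y ∉ A := fun h => hy (π.1.injective (hπ _ h))
  exact ⟨⟨Equiv.swap y (π.1 y), subset_closure ⟨y, π.1 y, Ne.symm hy, hyA, hπyA, rfl⟩⟩,
    swap_apply_left y (π.1 y)⟩

end FinPerm

section Supports

variable {𝔸 X : Type*} [DecidableEq 𝔸] [MulAction (FinPerm 𝔸) X] {A B : Set 𝔸} {x : X}

theorem NSupports.swap_smul (hx : NSupports 𝔸 A x) {a b : 𝔸} (ha : a ∉ A) (hb : b ∉ A) :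
    FinPerm.swap a b • x = x :=
  hx _ fun _ ht => swap_apply_of_ne_of_ne (ne_of_mem_of_not_mem ht ha) (ne_of_mem_of_not_mem ht hb)

theorem nSupports_of_swap_smul
    (h : ∀ a b, a ≠ b → a ∉ A → b ∉ A → FinPerm.swap a b • x = x) : NSupports 𝔸 A x := by
  intro π hπ
  have hle : closure (FinPerm.swapsOutside A) ≤
      (stabilizer (FinPerm 𝔸) x).map (FinPerm 𝔸).subtype := by
    rw [closure_le]
    rintro _ ⟨a, b, hab, ha, hb, rfl⟩
    exact ⟨FinPerm.swap a b, h a b hab ha hb, rfl⟩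
  obtain ⟨σ, hσ, hσπ⟩ := hle (FinPerm.mem_closure_swapsOutside π hπ)
  rwa [← Subtype.ext hσπ]

theorem NSupports.swap_smul_of_notMem_inter [Infinite 𝔸] (hA : A.Finite) (hB : B.Finite)
    (hAx : NSupports 𝔸 A x) (hBx : NSupports 𝔸 B x) {a b : 𝔸} (hab : a ≠ b)
    (ha : a ∉ A ∩ B) (hb : b ∉ A ∩ B) : FinPerm.swap a b • x = x := by
  obtain ⟨c, hc⟩ := ((hA.union hB).union (Set.toFinite {a, b})).infinite_compl.nonempty
  simp only [Set.mem_compl_iff, Set.mem_union, Set.mem_insert_iff, Set.mem_singleton_iff,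
    not_or] at hc
  obtain ⟨⟨hcA, hcB⟩, hca, hcb⟩ := hc
  have hswap_c : ∀ d ∉ A ∩ B, FinPerm.swap d c • x = x := fun d hd =>
    (not_and_or.1 hd).elim (hAx.swap_smul · hcA) (hBx.swap_smul · hcB)
  have hconj : FinPerm.swap a b = FinPerm.swap a c * FinPerm.swap b c * FinPerm.swap a c := by
    refine Subtype.ext ?_
    change Equiv.swap a b = Equiv.swap a c * Equiv.swap b c * Equiv.swap a c
    rw [← swap_comm c a]
    exact (swap_mul_swap_mul_swap (Ne.symm hcb) hab.symm).symm
  rw [hconj, mul_smul, mul_smul, hswap_c a ha, hswap_c b hb, hswap_c a ha]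

end Supports

theorem stmt_0 {𝔸 X : Type*} [Infinite 𝔸] [DecidableEq 𝔸] [MulAction (FinPerm 𝔸) X]
    (x : X) (A B : Set 𝔸) (hA : A.Finite) (hB : B.Finite)
    (hAsupp : NSupports 𝔸 A x) (hBsupp : NSupports 𝔸 B x) :
    NSupports 𝔸 (A ∩ B) x :=
  nSupports_of_swap_smul fun _ _ hab ha hb =>
    hAsupp.swap_smul_of_notMem_inter hA hB hBsupp hab ha hb
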